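/- Net argument identity: let S be a symmetric N×N matrix, and suppose every unit vector x can be written x = y + z with y ∈ B_s and z ∈ B_b (subsets of the unit ball), and that N_s, N_b are γ-nets of B_s, B_b respectively (γ < 1/12). Then ‖S‖_op ≤ (1 − 12γ)^{−1} [ max_{y∈N_s} |y^T S y| + max_{z∈N_b} |z^T S z| + 2 max_{y∈N_s, z∈N_b} |y^T S z| ]. -/

import Mathlib

/-!
Write a unit vector as `x = y + z` and replace `y`, `z` by net points `y'`, `z'`. By the bilinear
perturbation bound, each of the three terms of `⟪x, S x⟫ = ⟪y, S y⟫ + ⟪z, S z⟫ + 2 ⟪y, S z⟫` moves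
by at most `2γ‖S‖`, so `|⟪x, S x⟫| ≤ M + 8γ‖S‖` with `M` the net quantity on the right. For
symmetric `S` the operator norm is the supremum of `|⟪x, S x⟫|` over unit vectors, hence
`(1 - 8γ)‖S‖ ≤ M`, which is stronger than the claim.
-/

open Matrix

/-- The ℓ²→ℓ² operator (spectral) norm of a matrix. -/
noncomputable def opNorm {m n : ℕ} (A : Matrix (Fin m) (Fin n) ℝ) : ℝ :=
  ‖(Matrix.toEuclideanLin A).toContinuousLinearMap‖

open Finset RealInnerProductSpace

section

variable {E F : Type*} [NormedAddCommGroup E] [InnerProductSpace ℝ E]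
  [NormedAddCommGroup F] [InnerProductSpace ℝ F]

theorem ContinuousLinearMap.norm_le_of_abs_inner_self_le {T : E →L[ℝ] E}
    (hT : (T : E →ₗ[ℝ] E).IsSymmetric) {C : ℝ} (hC : 0 ≤ C)
    (h : ∀ x, ‖x‖ = 1 → |⟪x, T x⟫| ≤ C) : ‖T‖ ≤ C := by
  rw [T.norm_eq_iSup_rayleighQuotient hT]
  refine ciSup_le fun x => ?_
  rcases eq_or_ne x 0 with rfl | hx
  · simpa using hC
  have hx' : ‖x‖ ≠ 0 := norm_ne_zero_iff.mpr hx
  have hunit : ‖‖x‖⁻¹ • x‖ = 1 := by rw [norm_smul, norm_inv, norm_norm, inv_mul_cancel₀ hx']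
  rw [← T.rayleigh_smul x (inv_ne_zero hx'), ContinuousLinearMap.rayleighQuotient,
    ContinuousLinearMap.reApplyInnerSelf_apply, hunit, RCLike.re_to_real, real_inner_comm]
  simpa using h _ hunit

theorem abs_inner_map_sub_inner_map_le (T : E →L[ℝ] F) (u u' : F) (v v' : E) :
    |⟪u, T v⟫ - ⟪u', T v'⟫| ≤ ‖T‖ * (‖u - u'‖ * ‖v‖ + ‖u'‖ * ‖v - v'‖) :=
  calc |⟪u, T v⟫ - ⟪u', T v'⟫| = |⟪u - u', T v⟫ + ⟪u', T (v - v')⟫| := by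
        rw [map_sub, inner_sub_left, inner_sub_right]; ring_nf
    _ ≤ ‖u - u'‖ * ‖T v‖ + ‖u'‖ * ‖T (v - v')‖ :=
        (abs_add_le _ _).trans (add_le_add (abs_real_inner_le_norm _ _) (abs_real_inner_le_norm _ _))
    _ ≤ ‖u - u'‖ * (‖T‖ * ‖v‖) + ‖u'‖ * (‖T‖ * ‖v - v'‖) := by gcongr <;> exact T.le_opNorm _
    _ = ‖T‖ * (‖u - u'‖ * ‖v‖ + ‖u'‖ * ‖v - v'‖) := by ring

theorem abs_inner_map_le_of_norm_sub_le (T : E →L[ℝ] F) {γ : ℝ} {u u' : F} {v v' : E}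
    (hv : ‖v‖ ≤ 1) (hu' : ‖u'‖ ≤ 1) (hu : ‖u - u'‖ ≤ γ) (hv' : ‖v - v'‖ ≤ γ) :
    |⟪u, T v⟫| ≤ |⟪u', T v'⟫| + 2 * γ * ‖T‖ := by
  have hγ : 0 ≤ γ := (norm_nonneg _).trans hu
  have hpert := abs_inner_map_sub_inner_map_le T u u' v v'
  have hweight : ‖u - u'‖ * ‖v‖ + ‖u'‖ * ‖v - v'‖ ≤ 2 * γ := by
    nlinarith [norm_nonneg (u - u'), norm_nonneg (v - v'), norm_nonneg u']
  nlinarith [abs_sub_abs_le_abs_sub ⟪u, T v⟫ ⟪u', T v'⟫, norm_nonneg T]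

theorem abs_inner_add_map_add_le_of_norm_sub_le {T : E →L[ℝ] E}
    (hT : (T : E →ₗ[ℝ] E).IsSymmetric) {γ : ℝ} {y y' z z' : E} (hy : ‖y‖ ≤ 1) (hy' : ‖y'‖ ≤ 1) (hz : ‖z‖ ≤ 1) (hz' : ‖z'‖ ≤ 1)
    (hyy' : ‖y - y'‖ ≤ γ) (hzz' : ‖z - z'‖ ≤ γ) :
    |⟪y + z, T (y + z)⟫| ≤ |⟪y', T y'⟫| + |⟪z', T z'⟫| + 2 * |⟪y', T z'⟫| + 8 * γ * ‖T‖ := by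
  have hexpand : ⟪y + z, T (y + z)⟫ = ⟪y, T y⟫ + ⟪z, T z⟫ + 2 * ⟪y, T z⟫ := by
    have hzy : ⟪z, T y⟫ = ⟪y, T z⟫ := (hT z y).symm.trans (real_inner_comm _ _)
    rw [map_add, inner_add_left, inner_add_right, inner_add_right, hzy]
    ring
  have hyy := abs_inner_map_le_of_norm_sub_le T hy hy' hyy' hyy'
  have hzz := abs_inner_map_le_of_norm_sub_le T hz hz' hzz' hzz'
  have hyz := abs_inner_map_le_of_norm_sub_le T hz hy' hyy' hzz'
  calc |⟪y + z, T (y + z)⟫| ≤ |⟪y, T y⟫| + |⟪z, T z⟫| + 2 * |⟪y, T z⟫| := by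
        rw [hexpand, ← abs_two, ← abs_mul, abs_two]
        exact (abs_add_le _ _).trans (add_le_add_left (abs_add_le _ _) _)
    _ ≤ _ := by linarith

end

theorem Matrix.real_inner_toEuclideanLin {m n : Type*} [Fintype m] [Fintype n] [DecidableEq n]
    (S : Matrix m n ℝ) (u : EuclideanSpace ℝ m) (v : EuclideanSpace ℝ n) :
    ⟪u, S.toEuclideanLin v⟫ = u ⬝ᵥ S *ᵥ v := by
  rw [EuclideanSpace.inner_eq_star_dotProduct, dotProduct_comm]
  rfl

theorem net_bound_opNorm (N : ℕ) (γ : ℝ) (hγ0 : 0 < γ) (hγ : γ < 1 / 12)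
    (S : Matrix (Fin N) (Fin N) ℝ) (hS : Sᵀ = S)
    (Bs Bb : Set (EuclideanSpace ℝ (Fin N)))
    (hBs : Bs ⊆ Metric.closedBall 0 1) (hBb : Bb ⊆ Metric.closedBall 0 1)
    (hdecomp : ∀ x : EuclideanSpace ℝ (Fin N), ‖x‖ = 1 →
      ∃ y ∈ Bs, ∃ z ∈ Bb, x = y + z)
    (Ns Nb : Finset (EuclideanSpace ℝ (Fin N)))
    (hNsSub : ↑Ns ⊆ Bs) (hNbSub : ↑Nb ⊆ Bb)
    (hNsNet : ∀ y ∈ Bs, ∃ y' ∈ Ns, ‖y - y'‖ ≤ γ)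
    (hNbNet : ∀ z ∈ Bb, ∃ z' ∈ Nb, ‖z - z'‖ ≤ γ)
    (hNs : Ns.Nonempty) (hNb : Nb.Nonempty) :
    opNorm S ≤ (1 - 12 * γ)⁻¹ *
      (Ns.sup' hNs (fun y => |y ⬝ᵥ S.mulVec y|) +
        Nb.sup' hNb (fun z => |z ⬝ᵥ S.mulVec z|) +
        2 * Ns.sup' hNs (fun y => Nb.sup' hNb (fun z => |y ⬝ᵥ S.mulVec z|))) := by
  set T := (toEuclideanLin S).toContinuousLinearMap
  have hT : (T : EuclideanSpace ℝ (Fin N) →ₗ[ℝ] EuclideanSpace ℝ (Fin N)).IsSymmetric :=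
    isSymmetric_toEuclideanLin_iff.mpr (isHermitian_iff_isSymm.mpr hS)
  have hball {u} (hu : u ∈ Metric.closedBall (0 : EuclideanSpace ℝ (Fin N)) 1) : ‖u‖ ≤ 1 :=
    mem_closedBall_zero_iff.mp hu
  set Ms := Ns.sup' hNs (fun y => |y ⬝ᵥ S.mulVec y|)
  set Mb := Nb.sup' hNb (fun z => |z ⬝ᵥ S.mulVec z|)
  set Msb := Ns.sup' hNs (fun y => Nb.sup' hNb (fun z => |y ⬝ᵥ S.mulVec z|))
  have hM : 0 ≤ Ms + Mb + 2 * Msb := by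
    have ⟨y₀, hy₀⟩ := hNs
    have ⟨z₀, hz₀⟩ := hNb
    have hMs : 0 ≤ Ms := (le_sup'_iff _).mpr ⟨y₀, hy₀, abs_nonneg _⟩
    have hMb : 0 ≤ Mb := (le_sup'_iff _).mpr ⟨z₀, hz₀, abs_nonneg _⟩
    have hMsb : 0 ≤ Msb := (le_sup'_iff _).mpr ⟨y₀, hy₀, (le_sup'_iff _).mpr ⟨z₀, hz₀, abs_nonneg _⟩⟩
    positivity
  have hquad (x : EuclideanSpace ℝ (Fin N)) (hx : ‖x‖ = 1) :
      |⟪x, T x⟫| ≤ Ms + Mb + 2 * Msb + 8 * γ * ‖T‖ := by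
    obtain ⟨y, hy, z, hz, rfl⟩ := hdecomp x hx
    obtain ⟨y', hy', hyy'⟩ := hNsNet y hy
    obtain ⟨z', hz', hzz'⟩ := hNbNet z hz
    have hnet := abs_inner_add_map_add_le_of_norm_sub_le hT (hball (hBs hy)) (hball (hBs (hNsSub hy')))
      (hball (hBb hz)) (hball (hBb (hNbSub hz'))) hyy' hzz'
    simp only [T, LinearMap.coe_toContinuousLinearMap', real_inner_toEuclideanLin] at hnet ⊢
    have hs : |y' ⬝ᵥ S *ᵥ y'| ≤ Ms := (le_sup'_iff _).mpr ⟨y', hy', le_rfl⟩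
    have hb : |z' ⬝ᵥ S *ᵥ z'| ≤ Mb := (le_sup'_iff _).mpr ⟨z', hz', le_rfl⟩
    have hsb : |y' ⬝ᵥ S *ᵥ z'| ≤ Msb :=
      (le_sup'_iff _).mpr ⟨y', hy', (le_sup'_iff _).mpr ⟨z', hz', le_rfl⟩⟩
    linarith
  have hTM := T.norm_le_of_abs_inner_self_le hT (by positivity) hquad
  change ‖T‖ ≤ (1 - 12 * γ)⁻¹ * (Ms + Mb + 2 * Msb)
  rw [le_inv_mul_iff₀ (by linarith)]
  linarith [mul_nonneg hγ0.le (norm_nonneg T)]
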